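/- Let H be a complex Hilbert space, ψ ∈ H a unit vector, and A₀, A₁, B₀, B₁, C₀, C₁ : H →L[ℂ] H bounded self-adjoint operators, each squaring to the identity, such that every Aᵢ commutes with every Bⱼ and every Cₖ, and every Bⱼ commutes with every Cₖ. Let d = re⟪ψ, (A₀B₀A₁B₁ + A₁B₁A₀B₀)ψ⟫ / 2 and e = re⟪ψ, (A₀B₁A₁B₀ + A₁B₀A₀B₁)ψ⟫ / 2. Then |re⟪ψ, (A₀B₀C₀ + A₁B₁C₀ + A₀B₁C₁ − A₁B₀C₁)ψ⟫| ≤ √(2(1 + d)) + √(2(1 − e)). -/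

import Mathlib

/-! With `X = A₀B₀ + A₁B₁` and `Y = A₀B₁ - A₁B₀` (self-adjoint, since Alice's and Bob's
observables commute), the Mermin operator factors as `X C₀ + Y C₁`. As `C₀, C₁` are unitary,
Cauchy–Schwarz bounds the two expectations by `‖Xψ‖` and `‖Yψ‖`; and since `A₀B₀`, `A₁B₁`,
`A₀B₁`, `A₁B₀` are involutions, `‖Xψ‖² = 2 + ⟨{A₀B₀, A₁B₁}⟩ = 2(1 + d)` and
`‖Yψ‖² = 2 - ⟨{A₀B₁, A₁B₀}⟩ = 2(1 - e)`. -/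

open ContinuousLinearMap

section Involution

theorem Commute.mul_mul_self_eq_one {M : Type*} [Monoid M] {a b : M} (h : Commute a b)
    (ha : a * a = 1) (hb : b * b = 1) : a * b * (a * b) = 1 := by
  rw [h.symm.mul_mul_mul_comm, ha, hb, one_mul]

theorem IsSelfAdjoint.mem_unitary_of_mul_self_eq_one {M : Type*} [Monoid M] [StarMul M] {u : M}
    (hu : IsSelfAdjoint u) (h : u * u = 1) : u ∈ unitary M :=
  Unitary.mem_iff.2 ⟨by rw [hu.star_eq, h], by rw [hu.star_eq, h]⟩

variable {R : Type*} [Ring R] {p q : R}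

theorem add_mul_self_of_mul_self_eq_one (hp : p * p = 1) (hq : q * q = 1) :
    (p + q) * (p + q) = 2 + (p * q + q * p) := by
  rw [add_mul, mul_add, mul_add, hp, hq, ← one_add_one_eq_two]; abel

theorem sub_mul_self_of_mul_self_eq_one (hp : p * p = 1) (hq : q * q = 1) :
    (p - q) * (p - q) = 2 - (p * q + q * p) := by
  rw [sub_mul, mul_sub, mul_sub, hp, hq, ← one_add_one_eq_two]; abel

end Involution

section Hilbert

variable {H : Type*} [NormedAddCommGroup H] [InnerProductSpace ℂ H] [CompleteSpace H]
  {T P Q U : H →L[ℂ] H}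

theorem IsSelfAdjoint.norm_apply_sq (hT : IsSelfAdjoint T) (ψ : H) :
    ‖T ψ‖ ^ 2 = (inner ℂ ψ ((T * T) ψ)).re := by
  rw [apply_norm_sq_eq_inner_adjoint_right, ← star_eq_adjoint, hT.star_eq]; rfl

theorem IsSelfAdjoint.abs_re_inner_mul_unitary_apply_le (hT : IsSelfAdjoint T)
    (hU : U ∈ unitary (H →L[ℂ] H)) (ψ : H) :
    |(inner ℂ ψ ((T * U) ψ)).re| ≤ ‖T ψ‖ * ‖ψ‖ := by
  have hmove : inner ℂ ψ ((T * U) ψ) = inner ℂ (T ψ) (U ψ) := by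
    rw [mul_apply_eq_comp, ← adjoint_inner_left, ← star_eq_adjoint, hT.star_eq]
  calc |(inner ℂ ψ ((T * U) ψ)).re| ≤ ‖inner ℂ (T ψ) (U ψ)‖ :=
        hmove ▸ Complex.abs_re_le_norm _
    _ ≤ ‖T ψ‖ * ‖U ψ‖ := norm_inner_le_norm _ _
    _ = ‖T ψ‖ * ‖ψ‖ := by rw [norm_map_of_mem_unitary hU]

theorem norm_add_apply_sq_of_involutions (hP : IsSelfAdjoint P) (hQ : IsSelfAdjoint Q)
    (hP2 : P * P = 1) (hQ2 : Q * Q = 1) (ψ : H) :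
    ‖(P + Q) ψ‖ ^ 2 = 2 * ‖ψ‖ ^ 2 + (inner ℂ ψ ((P * Q + Q * P) ψ)).re := by
  rw [(hP.add hQ).norm_apply_sq, add_mul_self_of_mul_self_eq_one hP2 hQ2, add_apply, ofNat_apply,
    inner_add_right, Complex.add_re, inner_smul_right_eq_smul, Complex.smul_re,
    inner_self_eq_norm_sq_to_K, nsmul_eq_mul, Nat.cast_ofNat]
  norm_cast

theorem norm_sub_apply_sq_of_involutions (hP : IsSelfAdjoint P) (hQ : IsSelfAdjoint Q)
    (hP2 : P * P = 1) (hQ2 : Q * Q = 1) (ψ : H) :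
    ‖(P - Q) ψ‖ ^ 2 = 2 * ‖ψ‖ ^ 2 - (inner ℂ ψ ((P * Q + Q * P) ψ)).re := by
  rw [(hP.sub hQ).norm_apply_sq, sub_mul_self_of_mul_self_eq_one hP2 hQ2, sub_apply, ofNat_apply,
    inner_sub_right, Complex.sub_re, inner_smul_right_eq_smul, Complex.smul_re,
    inner_self_eq_norm_sq_to_K, nsmul_eq_mul, Nat.cast_ofNat]
  norm_cast

end Hilbert

theorem mermin_anticommutator_bound_general
    {H : Type*} [NormedAddCommGroup H] [InnerProductSpace ℂ H] [CompleteSpace H]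
    (ψ : H) (hψ : ‖ψ‖ = 1)
    (A₀ A₁ B₀ B₁ C₀ C₁ : H →L[ℂ] H)
    (hsa : ∀ X ∈ [A₀, A₁, B₀, B₁, C₀, C₁], IsSelfAdjoint X)
    (hsq : ∀ X ∈ [A₀, A₁, B₀, B₁, C₀, C₁], X * X = 1)
    (hAB : ∀ i ∈ [A₀, A₁], ∀ j ∈ [B₀, B₁], i * j = j * i)
    (d e : ℝ)
    (hd : d = (inner ℂ ψ ((A₀ * B₀ * (A₁ * B₁) + A₁ * B₁ * (A₀ * B₀)) ψ) : ℂ).re / 2)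
    (he : e = (inner ℂ ψ ((A₀ * B₁ * (A₁ * B₀) + A₁ * B₀ * (A₀ * B₁)) ψ) : ℂ).re / 2) :
    |(inner ℂ ψ ((A₀ * B₀ * C₀ + A₁ * B₁ * C₀ + A₀ * B₁ * C₁ - A₁ * B₀ * C₁) ψ) : ℂ).re| ≤
      Real.sqrt (2 * (1 + d)) + Real.sqrt (2 * (1 - e)) := by
  simp only [List.mem_cons, List.not_mem_nil, or_false, forall_eq_or_imp, forall_eq]
    at hsa hsq hAB
  obtain ⟨sA₀, sA₁, sB₀, sB₁, sC₀, sC₁⟩ := hsa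
  obtain ⟨qA₀, qA₁, qB₀, qB₁, qC₀, qC₁⟩ := hsq
  obtain ⟨⟨c₀₀, c₀₁⟩, c₁₀, c₁₁⟩ := hAB
  have hP := (sA₀.commute_iff sB₀).1 c₀₀
  have hQ := (sA₁.commute_iff sB₁).1 c₁₁
  have hR := (sA₀.commute_iff sB₁).1 c₀₁
  have hS := (sA₁.commute_iff sB₀).1 c₁₀
  have hP2 := Commute.mul_mul_self_eq_one c₀₀ qA₀ qB₀
  have hQ2 := Commute.mul_mul_self_eq_one c₁₁ qA₁ qB₁
  have hR2 := Commute.mul_mul_self_eq_one c₀₁ qA₀ qB₁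
  have hS2 := Commute.mul_mul_self_eq_one c₁₀ qA₁ qB₀
  have hMermin : A₀ * B₀ * C₀ + A₁ * B₁ * C₀ + A₀ * B₁ * C₁ - A₁ * B₀ * C₁ =
      (A₀ * B₀ + A₁ * B₁) * C₀ + (A₀ * B₁ - A₁ * B₀) * C₁ := by
    noncomm_ring
  set X := A₀ * B₀ + A₁ * B₁
  set Y := A₀ * B₁ - A₁ * B₀
  have hXψ : ‖X ψ‖ = √(2 * (1 + d)) := by
    rw [← Real.sqrt_sq (norm_nonneg _), norm_add_apply_sq_of_involutions hP hQ hP2 hQ2, hψ, hd]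
    congr 1; ring
  have hYψ : ‖Y ψ‖ = √(2 * (1 - e)) := by
    rw [← Real.sqrt_sq (norm_nonneg _), norm_sub_apply_sq_of_involutions hR hS hR2 hS2, hψ, he]
    congr 1; ring
  rw [hMermin, add_apply, inner_add_right, Complex.add_re]
  calc _ ≤ _ := abs_add_le _ _
    _ ≤ ‖X ψ‖ * ‖ψ‖ + ‖Y ψ‖ * ‖ψ‖ := add_le_add
        ((hP.add hQ).abs_re_inner_mul_unitary_apply_le (sC₀.mem_unitary_of_mul_self_eq_one qC₀) ψ)
        ((hR.sub hS).abs_re_inner_mul_unitary_apply_le (sC₁.mem_unitary_of_mul_self_eq_one qC₁) ψ)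
    _ = _ := by rw [hψ, mul_one, mul_one, hXψ, hYψ]

/-- In the tripartite quantum scenario, the Mermin parameter is
bounded by `√(2(1 + d)) + √(2(1 - e))` where `d = ⟨{A₀B₀, A₁B₁}⟩/2` and
`e = ⟨{A₀B₁, A₁B₀}⟩/2`. -/
theorem mermin_anticommutator_bound
    {H : Type*} [NormedAddCommGroup H] [InnerProductSpace ℂ H] [CompleteSpace H]
    (ψ : H) (hψ : ‖ψ‖ = 1)
    (A₀ A₁ B₀ B₁ C₀ C₁ : H →L[ℂ] H)
    (hsa : ∀ X ∈ [A₀, A₁, B₀, B₁, C₀, C₁], IsSelfAdjoint X)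
    (hsq : ∀ X ∈ [A₀, A₁, B₀, B₁, C₀, C₁], X * X = 1)
    (hAB : ∀ i ∈ [A₀, A₁], ∀ j ∈ [B₀, B₁], i * j = j * i)
    (hAC : ∀ i ∈ [A₀, A₁], ∀ k ∈ [C₀, C₁], i * k = k * i)
    (hBC : ∀ j ∈ [B₀, B₁], ∀ k ∈ [C₀, C₁], j * k = k * j)
    (d e : ℝ)
    (hd : d = (inner ℂ ψ ((A₀ * B₀ * (A₁ * B₁) + A₁ * B₁ * (A₀ * B₀)) ψ) : ℂ).re / 2)
    (he : e = (inner ℂ ψ ((A₀ * B₁ * (A₁ * B₀) + A₁ * B₀ * (A₀ * B₁)) ψ) : ℂ).re / 2) :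
    |(inner ℂ ψ ((A₀ * B₀ * C₀ + A₁ * B₁ * C₀ + A₀ * B₁ * C₁ - A₁ * B₀ * C₁) ψ) : ℂ).re| ≤
      Real.sqrt (2 * (1 + d)) + Real.sqrt (2 * (1 - e)) :=
  mermin_anticommutator_bound_general ψ hψ A₀ A₁ B₀ B₁ C₀ C₁ hsa hsq hAB d e hd he
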